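/- For γ ∈ ℂ, the polynomial g = γ^{n−1} φ_1 + γ^{n−2} φ_2 + ... + γ φ_{n−1} + φ_n satisfies (I − γD)g = φ_n − γⁿ, a polynomial all of whose roots have modulus (n!)^{1/n} |γ|; consequently K_h((I − γD)^{-1}) ≥ (n!)^{1/n} |γ|. -/

import Mathlib

open Polynomial

/-- `P n` is the space of complex polynomials of degree at most `n`. -/
noncomputable def Pn (n : ℕ) : Submodule ℂ (Polynomial ℂ) := Polynomial.degreeLT ℂ (n + 1)

noncomputable instance instPnEndAddCommGroup (n : ℕ) : AddCommGroup (Module.End ℂ (Pn n)) :=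
  LinearMap.addCommGroup

noncomputable instance instPnEndRing (n : ℕ) : Ring (Module.End ℂ (Pn n)) := Module.End.instRing

/-- The differentiation operator on `Pn n`. -/
noncomputable def Dop (n : ℕ) : Module.End ℂ (Pn n) :=
  (Polynomial.derivative (R := ℂ)).restrict (p := Pn n) (q := Pn n)
    (fun f hf => by
      simp only [Pn, Polynomial.mem_degreeLT] at *
      exact lt_of_le_of_lt (Polynomial.degree_derivative_le) hf)

/-- `calD n` is the span of `I, D, D^2, ..., D^n` in `L(Pn n)`. -/
noncomputable def calD (n : ℕ) : Submodule ℂ (Module.End ℂ (Pn n)) :=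
  Submodule.span ℂ (Set.range fun k : Fin (n + 1) => (Dop n) ^ (k : ℕ))

/-- `φ_k(z) = z^k / k!` as an element of `Pn n` (for `k ≤ n`). -/
noncomputable def phiP (n k : ℕ) (h : k ≤ n) : Pn n :=
  ⟨Polynomial.C (((Nat.factorial k : ℂ))⁻¹) * Polynomial.X ^ k, by
    rw [Pn, Polynomial.mem_degreeLT]
    exact lt_of_le_of_lt (Polynomial.degree_C_mul_X_pow_le _ _)
      (by exact_mod_cast Nat.lt_succ_of_le h)⟩

/-- The set of roots of a polynomial. -/
def Zset (p : Polynomial ℂ) : Set ℂ := {z : ℂ | p.IsRoot z}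

/-- The (asymmetric Hausdorff) distance `d_h(A, B) = sup_{y ∈ B} inf_{x ∈ A} |x - y|`. -/
noncomputable def dh (A B : Set ℂ) : ℝ := sSup ((fun y => Metric.infDist y A) '' B)

/-- `K_h(T) = sup { d_h(Z(f), Z(Tf)) : f ∈ P_n nonconstant }`. -/
noncomputable def Kh (n : ℕ) (T : Module.End ℂ (Pn n)) : ℝ :=
  sSup {d : ℝ | ∃ f : Pn n, 0 < (f : Polynomial ℂ).degree ∧
    d = dh (Zset (f : Polynomial ℂ)) (Zset ((T f : Pn n) : Polynomial ℂ))}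

/-! If `S (1 - γD) = 1` then `S = ∑_{k ≤ n} γ^k D^k`, since `D` is nilpotent on `P_n`. A root `y`
of `S f` lies within `R = 2n|γ| + 1` of a root of `f`: otherwise the Taylor expansion `q` of `f` at
`y` has all roots of modulus at least `R`, whence `|q_k| R^k ≤ C(n, k) |q_0|` and
`|f^{(k)}(y)| ≤ (n / R)^k |f(y)|`, so the terms `γ^k f^{(k)}(y)` with `k ≥ 1` cannot cancel `f(y)`.
Hence the supremum defining `K_h(S)` is over a bounded set (an unbounded one would give the junk
value `0`), and the witness `f = φ_n - γ^n`, whose image `S f = g` vanishes at `0` while all its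
roots have modulus `(n!)^{1/n}|γ|`, bounds it from below. -/

section CoeffBounds

variable {K : Type*} [NormedField K]

theorem norm_coeff_mul_pow_le_of_forall_le_norm {R : ℝ} (hR : 0 ≤ R) (c : K) (s : Multiset K)
    (hs : ∀ w ∈ s, R ≤ ‖w‖) (k : ℕ) :
    ‖(C c * (s.map fun w => X - C w).prod).coeff k‖ * R ^ k ≤
      (Multiset.card s).choose k * ‖(C c * (s.map fun w => X - C w).prod).coeff 0‖ := by
  induction s using Multiset.induction_on generalizing k with
  | empty =>
    rcases k with _ | k
    · simp
    · simp [coeff_C]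
  | cons w s ih =>
    have hw : R ≤ ‖w‖ := hs w (Multiset.mem_cons_self w s)
    have ih := fun k => ih (fun v hv => hs v (Multiset.mem_cons_of_mem hv)) k
    set p := C c * (s.map fun w => X - C w).prod
    have hp : C c * ((w ::ₘ s).map fun w => X - C w).prod = p * (X - C w) := by
      simp only [Multiset.map_cons, Multiset.prod_cons, p]; ring
    have h0 : ‖(p * (X - C w)).coeff 0‖ = ‖p.coeff 0‖ * ‖w‖ := by
      simp [mul_coeff_zero]
    rw [hp, h0, Multiset.card_cons]
    rcases k with _ | k
    · simp
    · calc ‖(p * (X - C w)).coeff (k + 1)‖ * R ^ (k + 1)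
            ≤ (‖p.coeff k‖ + ‖p.coeff (k + 1)‖ * ‖w‖) * R ^ (k + 1) := by
              rw [coeff_mul_X_sub_C, ← norm_mul]
              gcongr
              exact norm_sub_le _ _
          _ = (‖p.coeff k‖ * R ^ k) * R + (‖p.coeff (k + 1)‖ * R ^ (k + 1)) * ‖w‖ := by ring
          _ ≤ (s.card.choose k * ‖p.coeff 0‖) * ‖w‖ +
              (s.card.choose (k + 1) * ‖p.coeff 0‖) * ‖w‖ := by
              gcongr ?_ + ?_
              · exact mul_le_mul (ih k) hw hR (by positivity)
              · exact mul_le_mul_of_nonneg_right (ih (k + 1)) (norm_nonneg w)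
          _ = ((s.card + 1).choose (k + 1) : ℕ) * (‖p.coeff 0‖ * ‖w‖) := by
              rw [Nat.choose_succ_succ]; push_cast; ring

theorem norm_coeff_mul_pow_le_of_forall_roots [IsAlgClosed K] {R : ℝ} (hR : 0 ≤ R) (q : K[X])
    (hq : ∀ w ∈ q.roots, R ≤ ‖w‖) (k : ℕ) :
    ‖q.coeff k‖ * R ^ k ≤ q.natDegree.choose k * ‖q.coeff 0‖ := by
  have h := norm_coeff_mul_pow_le_of_forall_le_norm hR q.leadingCoeff q.roots hq k
  rwa [C_leadingCoeff_mul_prod_multiset_X_sub_C IsAlgClosed.card_roots_eq_natDegree,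
    IsAlgClosed.card_roots_eq_natDegree] at h

end CoeffBounds

theorem norm_sum_range_lt_of_norm_le_half_pow {E : Type*} [SeminormedAddCommGroup E] {c : ℝ}
    (hc : 0 < c) (b : ℕ → E) (hb : ∀ k, ‖b k‖ ≤ (1 / 2) ^ (k + 1) * c) (N : ℕ) :
    ‖∑ k ∈ Finset.range N, b k‖ < c := by
  have hgeom : ∑ k ∈ Finset.range N, (1 / 2 : ℝ) ^ (k + 1) = 1 - (1 / 2) ^ N := by
    induction N with
    | zero => simp
    | succ N ih => rw [Finset.sum_range_succ, ih]; ring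
  calc ‖∑ k ∈ Finset.range N, b k‖ ≤ ∑ k ∈ Finset.range N, (1 / 2 : ℝ) ^ (k + 1) * c :=
        (norm_sum_le _ _).trans (Finset.sum_le_sum fun k _ => hb k)
    _ = (1 - (1 / 2) ^ N) * c := by rw [← Finset.sum_mul, hgeom]
    _ < c := by nlinarith [pow_pos (by norm_num : (0 : ℝ) < 1 / 2) N]

theorem iterate_derivative_eval_eq_factorial_mul_coeff_taylor {R : Type*} [CommSemiring R]
    (f : R[X]) (y : R) (k : ℕ) :
    (derivative^[k] f).eval y = k.factorial * (taylor y f).coeff k := by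
  rw [taylor_coeff, ← factorial_smul_hasseDeriv, LinearMap.smul_apply, nsmul_eq_mul, eval_mul,
    eval_natCast]

theorem norm_pow_mul_iterate_derivative_eval_le {f : ℂ[X]} {γ y : ℂ} {R : ℝ} (hR : 0 < R)
    (hγ : 2 * f.natDegree * ‖γ‖ ≤ R) (hfar : ∀ z, f.IsRoot z → R ≤ ‖y - z‖) (k : ℕ) :
    ‖γ ^ k * (derivative^[k] f).eval y‖ ≤ (1 / 2) ^ k * ‖f.eval y‖ := by
  set q := taylor y f
  set m := f.natDegree
  have hroots : ∀ w ∈ q.roots, R ≤ ‖w‖ := fun w hw => by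
    have hroot : f.IsRoot (w + y) := by
      rw [IsRoot, ← taylor_eval]; exact isRoot_of_mem_roots hw
    simpa using hfar _ hroot
  have hcoeff := norm_coeff_mul_pow_le_of_forall_roots hR.le q hroots k
  rw [natDegree_taylor] at hcoeff
  have hfact : ((k.factorial * m.choose k : ℕ) : ℝ) ≤ (m ^ k : ℕ) := by
    exact_mod_cast (Nat.descFactorial_eq_factorial_mul_choose m k).symm.trans_le
      (Nat.descFactorial_le_pow m k)
  rw [iterate_derivative_eval_eq_factorial_mul_coeff_taylor, ← taylor_coeff_zero, norm_mul,
    norm_mul, norm_pow, Complex.norm_natCast, ← mul_le_mul_iff_of_pos_right (pow_pos hR k)]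
  calc ‖γ‖ ^ k * (k.factorial * ‖q.coeff k‖) * R ^ k
      = ‖γ‖ ^ k * k.factorial * (‖q.coeff k‖ * R ^ k) := by ring
    _ ≤ ‖γ‖ ^ k * k.factorial * (m.choose k * ‖q.coeff 0‖) := by gcongr
    _ = ‖γ‖ ^ k * ((k.factorial * m.choose k : ℕ) : ℝ) * ‖q.coeff 0‖ := by push_cast; ring
    _ ≤ ‖γ‖ ^ k * (m ^ k : ℕ) * ‖q.coeff 0‖ := by gcongr
    _ = ((2 * m * ‖γ‖) * (1 / 2)) ^ k * ‖q.coeff 0‖ := by push_cast; ring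
    _ ≤ (R * (1 / 2)) ^ k * ‖q.coeff 0‖ := by gcongr
    _ = (1 / 2) ^ k * ‖q.coeff 0‖ * R ^ k := by ring

theorem exists_isRoot_norm_sub_lt_of_sum_iterate_derivative_eval_eq_zero {f : ℂ[X]} {γ y : ℂ}
    {R : ℝ} (hR : 0 < R) (hγ : 2 * f.natDegree * ‖γ‖ ≤ R) (N : ℕ)
    (h : ∑ k ∈ Finset.range (N + 1), γ ^ k * (derivative^[k] f).eval y = 0) :
    ∃ z, f.IsRoot z ∧ ‖y - z‖ < R := by
  by_contra! hfar
  have hy : f.eval y ≠ 0 := fun hy => by simpa using hR.trans_le (hfar y hy)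
  have hlt := norm_sum_range_lt_of_norm_le_half_pow (norm_pos_iff.2 hy)
    (fun k => γ ^ (k + 1) * (derivative^[k + 1] f).eval y)
    (fun k => norm_pow_mul_iterate_derivative_eval_le hR hγ hfar (k + 1)) N
  rw [Finset.sum_range_succ', pow_zero, one_mul, Function.iterate_zero_apply] at h
  rw [eq_neg_of_add_eq_zero_left h, norm_neg] at hlt
  exact lt_irrefl _ hlt

theorem eq_geom_sum_of_mul_one_sub_eq_one {A : Type*} [Ring A] {x S : A} {N : ℕ} (hx : x ^ N = 0)
    (hS : S * (1 - x) = 1) : S = ∑ k ∈ Finset.range N, x ^ k := by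
  calc S = S * ((1 - x) * ∑ k ∈ Finset.range N, x ^ k) := by
        rw [mul_neg_geom_sum, hx, sub_zero, mul_one]
    _ = ∑ k ∈ Finset.range N, x ^ k := by rw [← mul_assoc, hS, one_mul]

theorem norm_eq_rpow_mul_norm_of_pow_eq {n : ℕ} (hn : n ≠ 0) {z γ : ℂ} {c : ℝ} (hc : 0 ≤ c)
    (h : z ^ n = c * γ ^ n) : ‖z‖ = c ^ (1 / (n : ℝ)) * ‖γ‖ := by
  have hnorm : ‖z‖ ^ n = (c ^ (1 / (n : ℝ)) * ‖γ‖) ^ n := by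
    rw [mul_pow, one_div, Real.rpow_inv_natCast_pow hc hn, ← norm_pow, h, norm_mul, norm_pow,
      Complex.norm_real, Real.norm_of_nonneg hc]
  exact (pow_left_inj₀ (norm_nonneg z) (by positivity) hn).1 hnorm

theorem derivative_C_inv_factorial_mul_X_pow_succ (k : ℕ) :
    derivative (C ((k + 1).factorial : ℂ)⁻¹ * X ^ (k + 1)) = C (k.factorial : ℂ)⁻¹ * X ^ k := by
  rw [derivative_C_mul_X_pow, Nat.add_sub_cancel, Nat.factorial_succ, Nat.cast_mul, mul_inv,
    Nat.cast_succ, mul_comm ((k : ℂ) + 1)⁻¹, mul_assoc, inv_mul_cancel₀ (by norm_cast), mul_one]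

section Pn

variable {n : ℕ}

theorem natDegree_le_of_mem_Pn (f : Pn n) : (f : ℂ[X]).natDegree ≤ n :=
  natDegree_le_of_degree_le (Order.le_of_lt_succ (mem_degreeLT.1 f.2))

theorem coe_Dop_pow_apply (k : ℕ) (f : Pn n) :
    (((Dop n ^ k) f : Pn n) : ℂ[X]) = derivative^[k] (f : ℂ[X]) := by
  induction k generalizing f with
  | zero => rfl
  | succ k ih => rw [pow_succ, Module.End.mul_apply, ih, Function.iterate_succ_apply]; rfl

theorem Dop_pow_succ_eq_zero : Dop n ^ (n + 1) = 0 :=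
  LinearMap.ext fun f => Subtype.ext <| by
    rw [coe_Dop_pow_apply,
      iterate_derivative_eq_zero (Nat.lt_succ_of_le (natDegree_le_of_mem_Pn f))]
    rfl

theorem coe_phiP (k : ℕ) (h : k ≤ n) :
    ((phiP n k h : Pn n) : ℂ[X]) = C (k.factorial : ℂ)⁻¹ * X ^ k := rfl

end Pn

section LeftInverse

variable {n : ℕ} {γ : ℂ} {S : Module.End ℂ (Pn n)}

theorem eval_apply_eq_sum_of_mul_one_sub_eq_one (hS : S * (1 - γ • Dop n) = 1) (f : Pn n)
    (y : ℂ) : ((S f : Pn n) : ℂ[X]).eval y =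
      ∑ k ∈ Finset.range (n + 1), γ ^ k * (derivative^[k] (f : ℂ[X])).eval y := by
  have hx : (γ • Dop n) ^ (n + 1) = 0 := by rw [_root_.smul_pow, Dop_pow_succ_eq_zero, smul_zero]
  rw [eq_geom_sum_of_mul_one_sub_eq_one hx hS, LinearMap.sum_apply, Submodule.coe_sum,
    eval_finsetSum]
  refine Finset.sum_congr rfl fun k _ => ?_
  rw [_root_.smul_pow, LinearMap.smul_apply, SetLike.val_smul, coe_Dop_pow_apply, eval_smul,
    smul_eq_mul]

theorem infDist_Zset_lt (hS : S * (1 - γ • Dop n) = 1) (f : Pn n) {y : ℂ}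
    (hy : y ∈ Zset ((S f : Pn n) : ℂ[X])) :
    Metric.infDist y (Zset (f : ℂ[X])) < 2 * n * ‖γ‖ + 1 := by
  have hdeg : 2 * ((f : ℂ[X]).natDegree : ℝ) * ‖γ‖ ≤ 2 * n * ‖γ‖ + 1 := by
    have : ((f : ℂ[X]).natDegree : ℝ) ≤ n := by exact_mod_cast natDegree_le_of_mem_Pn f
    nlinarith [norm_nonneg γ]
  obtain ⟨z, hz, hyz⟩ := exists_isRoot_norm_sub_lt_of_sum_iterate_derivative_eval_eq_zero
    (by positivity) hdeg n ((eval_apply_eq_sum_of_mul_one_sub_eq_one hS f y).symm.trans hy)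
  exact (Metric.infDist_le_dist_of_mem (show z ∈ Zset _ from hz)).trans_lt
    (by rwa [Complex.dist_eq])

theorem bddAbove_infDist_image_Zset (hS : S * (1 - γ • Dop n) = 1) (f : Pn n) :
    BddAbove ((fun y => Metric.infDist y (Zset (f : ℂ[X]))) '' Zset ((S f : Pn n) : ℂ[X])) :=
  ⟨_, Set.forall_mem_image.2 fun _ hy => (infDist_Zset_lt hS f hy).le⟩

theorem infDist_le_dh (hS : S * (1 - γ • Dop n) = 1) (f : Pn n) {y : ℂ}
    (hy : y ∈ Zset ((S f : Pn n) : ℂ[X])) :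
    Metric.infDist y (Zset (f : ℂ[X])) ≤ dh (Zset (f : ℂ[X])) (Zset ((S f : Pn n) : ℂ[X])) :=
  le_csSup (bddAbove_infDist_image_Zset hS f) (Set.mem_image_of_mem _ hy)

theorem dh_le_Kh (hS : S * (1 - γ • Dop n) = 1) (f : Pn n) (hf : 0 < (f : ℂ[X]).degree) :
    dh (Zset (f : ℂ[X])) (Zset ((S f : Pn n) : ℂ[X])) ≤ Kh n S := by
  refine le_csSup ⟨2 * n * ‖γ‖ + 1, ?_⟩ ⟨f, hf, rfl⟩
  rintro _ ⟨f, -, rfl⟩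
  exact Real.sSup_le (Set.forall_mem_image.2 fun _ hy => (infDist_Zset_lt hS f hy).le)
    (by positivity)

end LeftInverse

section Witness

variable (n : ℕ) (γ : ℂ)

theorem coe_phiP_sub_smul_phiP_zero :
    ((phiP n n le_rfl - γ ^ n • phiP n 0 (Nat.zero_le n) : Pn n) : ℂ[X]) =
      C (n.factorial : ℂ)⁻¹ * X ^ n - C (γ ^ n) := by
  simp [coe_phiP, smul_eq_C_mul]

theorem one_sub_smul_Dop_apply_sum :
    (1 - γ • Dop n) (∑ j : Fin n, γ ^ (n - ((j : ℕ) + 1)) • phiP n ((j : ℕ) + 1)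
      (Nat.succ_le_of_lt j.isLt)) = phiP n n le_rfl - γ ^ n • phiP n 0 (Nat.zero_le n) := by
  set F : ℕ → ℂ[X] := fun j => γ ^ (n - j) • (C (j.factorial : ℂ)⁻¹ * X ^ j)
  have hstep : ∀ j < n, γ ^ (n - (j + 1)) • (C ((j + 1).factorial : ℂ)⁻¹ * X ^ (j + 1)) -
      γ • derivative (γ ^ (n - (j + 1)) • (C ((j + 1).factorial : ℂ)⁻¹ * X ^ (j + 1))) =
      F (j + 1) - F j := fun j hj => by
    rw [derivative_smul, derivative_C_inv_factorial_mul_X_pow_succ, smul_smul, ← pow_succ',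
      show n - (j + 1) + 1 = n - j by omega]
  apply Subtype.ext
  calc _ = ∑ j : Fin n, (F (j + 1) - F j) := by
        simp only [LinearMap.sub_apply, Module.End.one_apply, LinearMap.smul_apply, map_sum,
          Submodule.coe_sub, Submodule.coe_sum, Submodule.coe_smul]
        exact Finset.sum_congr rfl fun j _ => hstep j j.isLt
    _ = ∑ j ∈ Finset.range n, (F (j + 1) - F j) :=
        Fin.sum_univ_eq_sum_range (fun j => F (j + 1) - F j) n
    _ = F n - F 0 := Finset.sum_range_sub F n
    _ = _ := by simp [F, coe_phiP, smul_eq_C_mul]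

theorem degree_phiP_sub_smul_phiP_zero_pos (hn : 0 < n) :
    0 < ((phiP n n le_rfl - γ ^ n • phiP n 0 (Nat.zero_le n) : Pn n) : ℂ[X]).degree := by
  have hd : (C (n.factorial : ℂ)⁻¹ * X ^ n).degree = (n : WithBot ℕ) :=
    degree_C_mul_X_pow n (inv_ne_zero (Nat.cast_ne_zero.2 n.factorial_ne_zero))
  have hn' : (0 : WithBot ℕ) < n := by exact_mod_cast hn
  rwa [coe_phiP_sub_smul_phiP_zero, degree_sub_C (hd ▸ hn'), hd]

theorem norm_eq_of_isRoot_phiP_sub_smul_phiP_zero (hn : 0 < n) {z : ℂ}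
    (hz : ((phiP n n le_rfl - γ ^ n • phiP n 0 (Nat.zero_le n) : Pn n) : ℂ[X]).IsRoot z) :
    ‖z‖ = (n.factorial : ℝ) ^ (1 / (n : ℝ)) * ‖γ‖ := by
  refine norm_eq_rpow_mul_norm_of_pow_eq hn.ne' (Nat.cast_nonneg _) ?_
  rw [coe_phiP_sub_smul_phiP_zero, IsRoot, eval_sub, eval_mul, eval_C, eval_C, eval_pow, eval_X,
    sub_eq_zero, inv_mul_eq_iff_eq_mul₀ (Nat.cast_ne_zero.2 n.factorial_ne_zero)] at hz
  exact_mod_cast hz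

theorem isRoot_sum_smul_phiP_zero :
    ((∑ j : Fin n, γ ^ (n - ((j : ℕ) + 1)) • phiP n ((j : ℕ) + 1)
      (Nat.succ_le_of_lt j.isLt) : Pn n) : ℂ[X]).IsRoot 0 := by
  simp [coe_phiP, eval_finsetSum]

end Witness

/-- For `γ ∈ ℂ`, the polynomial `g = γ^{n-1}φ_1 + γ^{n-2}φ_2 + ⋯ + γφ_{n-1} + φ_n`
satisfies `(I - γD)g = φ_n - γⁿ`, all roots of which have modulus `(n!)^{1/n}|γ|`;
consequently `K_h((I - γD)⁻¹) ≥ (n!)^{1/n}|γ|`. -/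
theorem Kh_inverse_lower_bound (n : ℕ) (hn : 0 < n) (γ : ℂ)
    (g : Pn n)
    (hg : g = ∑ j : Fin n, γ ^ (n - ((j : ℕ) + 1)) • phiP n ((j : ℕ) + 1)
      (Nat.succ_le_of_lt j.isLt)) :
    (1 - γ • Dop n) g = phiP n n le_rfl - γ ^ n • phiP n 0 (Nat.zero_le n) ∧
    (∀ z : ℂ, (((phiP n n le_rfl - γ ^ n • phiP n 0 (Nat.zero_le n) : Pn n)) :
        Polynomial ℂ).IsRoot z →
      ‖z‖ = ((Nat.factorial n : ℝ)) ^ (1 / (n : ℝ)) * ‖γ‖) ∧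
    (∀ S : Module.End ℂ (Pn n), S * (1 - γ • Dop n) = 1 → (1 - γ • Dop n) * S = 1 →
      ((Nat.factorial n : ℝ)) ^ (1 / (n : ℝ)) * ‖γ‖ ≤ Kh n S) := by
  set f₀ := phiP n n le_rfl - γ ^ n • phiP n 0 (Nat.zero_le n)
  have hgf₀ : (1 - γ • Dop n) g = f₀ := hg ▸ one_sub_smul_Dop_apply_sum n γ
  have hroots : ∀ z, (f₀ : ℂ[X]).IsRoot z → ‖z‖ = (n.factorial : ℝ) ^ (1 / (n : ℝ)) * ‖γ‖ :=
    fun _ => norm_eq_of_isRoot_phiP_sub_smul_phiP_zero n γ hn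
  refine ⟨hgf₀, hroots, fun S hS _ => ?_⟩
  have hdeg := degree_phiP_sub_smul_phiP_zero_pos n γ hn
  have hSf₀ : S f₀ = g := by rw [← hgf₀, ← Module.End.mul_apply, hS, Module.End.one_apply]
  have h0 : (0 : ℂ) ∈ Zset ((S f₀ : Pn n) : ℂ[X]) := hSf₀ ▸ hg ▸ isRoot_sum_smul_phiP_zero n γ
  calc (n.factorial : ℝ) ^ (1 / (n : ℝ)) * ‖γ‖ ≤ Metric.infDist 0 (Zset (f₀ : ℂ[X])) :=
        (Metric.le_infDist (Complex.exists_root hdeg)).2 fun z hz => by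
          rw [dist_comm, dist_zero_right, hroots z hz]
    _ ≤ dh (Zset (f₀ : ℂ[X])) (Zset ((S f₀ : Pn n) : ℂ[X])) := infDist_le_dh hS f₀ h0
    _ ≤ Kh n S := dh_le_Kh hS f₀ hdeg
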